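/- For every integer k ≥ 0, the polynomial Q_k is left Fueter regular, i.e. ∂Q_k(q) = 0 for all quaternions q; thus each Q_k is a quaternionic spherical monogenic of degree k. -/

import Mathlib

open Quaternion

set_option synthInstance.maxHeartbeats 1000000
set_option maxHeartbeats 1000000

noncomputable section

/-- The imaginary unit `i` of the quaternions. -/
def qI : ℍ[ℝ] := ⟨0, 1, 0, 0⟩

/-- The imaginary unit `j` of the quaternions. -/
def qJ : ℍ[ℝ] := ⟨0, 0, 1, 0⟩

/-- The imaginary unit `k` of the quaternions. -/
def qK : ℍ[ℝ] := ⟨0, 0, 0, 1⟩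

/-- Directional (partial) derivative of `f : ℍ → ℍ` along the direction `v`, at `q`. -/
def dd (v : ℍ[ℝ]) (f : ℍ[ℝ] → ℍ[ℝ]) (q : ℍ[ℝ]) : ℍ[ℝ] := fderiv ℝ f q v

/-- The Cauchy–Fueter operator `∂f = ∂_{x₀}f + i ∂_{x₁}f + j ∂_{x₂}f + k ∂_{x₃}f`. -/
def CF (f : ℍ[ℝ] → ℍ[ℝ]) (q : ℍ[ℝ]) : ℍ[ℝ] :=
  dd 1 f q + qI * dd qI f q + qJ * dd qJ f q + qK * dd qK f q

/-- The conjugate Cauchy–Fueter operator `∂̄f = ∂_{x₀}f − i ∂_{x₁}f − j ∂_{x₂}f − k ∂_{x₃}f`. -/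
def CFbar (f : ℍ[ℝ] → ℍ[ℝ]) (q : ℍ[ℝ]) : ℍ[ℝ] :=
  dd 1 f q - qI * dd qI f q - qJ * dd qJ f q - qK * dd qK f q

/-- The Laplacian `Δf = ∂²_{x₀}f + ∂²_{x₁}f + ∂²_{x₂}f + ∂²_{x₃}f` on `ℍ ≅ ℝ⁴`. -/
def lap (f : ℍ[ℝ] → ℍ[ℝ]) (q : ℍ[ℝ]) : ℍ[ℝ] :=
  dd 1 (dd 1 f) q + dd qI (dd qI f) q + dd qJ (dd qJ f) q + dd qK (dd qK f) q

/-- The coefficients `T^k_j = 2(k−j+1)/((k+1)(k+2))`. -/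
def T (k j : ℕ) : ℝ := 2 * ((k : ℝ) - j + 1) / (((k : ℝ) + 1) * ((k : ℝ) + 2))

/-- The Fueter regular polynomials `Q_k(q) = ∑_{j=0}^k T^k_j q^{k−j} (conj q)^j`. -/
def Q (k : ℕ) (q : ℍ[ℝ]) : ℍ[ℝ] :=
  ∑ j ∈ Finset.range (k + 1), ((T k j : ℝ) : ℍ[ℝ]) * (q ^ (k - j) * (star q) ^ j)

noncomputable def starCLM : ℍ[ℝ] →L[ℝ] ℍ[ℝ] :=
{ toFun := star,
  map_add' := star_add,
  map_smul' := fun r x => by simp [Quaternion.star_smul],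
  cont := continuous_star }

@[simp] lemma starCLM_apply (v : ℍ[ℝ]) : starCLM v = star v := rfl

noncomputable def mulLR (a b : ℍ[ℝ]) : ℍ[ℝ] →L[ℝ] ℍ[ℝ] :=
{ toFun := fun v => a * v * b,
  map_add' := fun x y => by simp [mul_add, add_mul],
  map_smul' := fun r x => by simp [mul_smul_comm, smul_mul_assoc],
  cont := by
    exact ((continuous_const.mul continuous_id).mul continuous_const) }

@[simp] lemma mulLR_apply (a b v : ℍ[ℝ]) : mulLR a b v = a * v * b := rfl

noncomputable def Dpow (m : ℕ) (q : ℍ[ℝ]) : ℍ[ℝ] →L[ℝ] ℍ[ℝ] :=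
  ∑ a ∈ Finset.range m, mulLR (q ^ a) (q ^ (m - 1 - a))

lemma Dpow_apply (m : ℕ) (q v : ℍ[ℝ]) :
    Dpow m q v = ∑ a ∈ Finset.range m, q ^ a * v * q ^ (m - 1 - a) := by
  simp [Dpow]

lemma hasFDerivAt_qpow (m : ℕ) (q : ℍ[ℝ]) :
    HasFDerivAt (fun x : ℍ[ℝ] => x ^ m) (Dpow m q) q := by
  induction m with
  | zero =>
      simpa [Dpow] using (hasFDerivAt_const (1 : ℍ[ℝ]) q)
  | succ m ih =>
      have h := ih.fun_mul' (hasFDerivAt_id q)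
      simp only [id] at h
      have hf : (fun x : ℍ[ℝ] => x ^ m * x) = fun x : ℍ[ℝ] => x ^ (m + 1) := by
        funext x; rw [pow_succ]
      rw [hf] at h
      have hD : Dpow (m + 1) q
          = q ^ m • ContinuousLinearMap.id ℝ ℍ[ℝ] + (Dpow m q).smulRight q := by
        refine ContinuousLinearMap.ext fun v => ?_
        simp only [Dpow, ContinuousLinearMap.sum_apply, mulLR_apply,
          ContinuousLinearMap.add_apply, ContinuousLinearMap.smul_apply,
          ContinuousLinearMap.smulRight_apply, ContinuousLinearMap.id_apply,
          smul_eq_mul, Finset.sum_mul]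
        rw [Finset.sum_range_succ]
        have h1 : ∀ a ∈ Finset.range m,
            q ^ a * v * q ^ (m + 1 - 1 - a) = q ^ a * v * q ^ (m - 1 - a) * q := by
          intro a ha
          rw [Finset.mem_range] at ha
          have h2 : m + 1 - 1 - a = m - 1 - a + 1 := by omega
          rw [h2, pow_succ, ← mul_assoc]
        rw [Finset.sum_congr rfl h1]
        simp [add_comm]
      rw [hD]
      exact h

noncomputable def Dmono (m n : ℕ) (q : ℍ[ℝ]) : ℍ[ℝ] →L[ℝ] ℍ[ℝ] :=
  q ^ m • ((Dpow n (star q)).comp starCLM) + (Dpow m q).smulRight ((star q) ^ n)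

lemma hasFDerivAt_mono (m n : ℕ) (q : ℍ[ℝ]) :
    HasFDerivAt (fun x : ℍ[ℝ] => x ^ m * (star x) ^ n) (Dmono m n q) q := by
  have hs : HasFDerivAt (fun x : ℍ[ℝ] => (star x) ^ n) ((Dpow n (star q)).comp starCLM) q :=
    (hasFDerivAt_qpow n (star q)).comp q starCLM.hasFDerivAt
  exact (hasFDerivAt_qpow m q).mul' hs

noncomputable def DQ (k : ℕ) (q : ℍ[ℝ]) : ℍ[ℝ] →L[ℝ] ℍ[ℝ] :=
  ∑ j ∈ Finset.range (k + 1), ((T k j : ℝ) : ℍ[ℝ]) • Dmono (k - j) j q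

lemma hasFDerivAt_Q (k : ℕ) (q : ℍ[ℝ]) : HasFDerivAt (Q k) (DQ k q) q := by
  have : HasFDerivAt (fun q : ℍ[ℝ] => ∑ j ∈ Finset.range (k + 1),
      ((T k j : ℝ) : ℍ[ℝ]) * (q ^ (k - j) * (star q) ^ j)) (DQ k q) q :=
    HasFDerivAt.fun_sum fun j _ => (hasFDerivAt_mono (k - j) j q).const_mul _
  exact this

lemma CF_eq (f : ℍ[ℝ] → ℍ[ℝ]) (D : ℍ[ℝ] →L[ℝ] ℍ[ℝ]) (q : ℍ[ℝ])
    (h : HasFDerivAt f D q) :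
    CF f q = D 1 + qI * D qI + qJ * D qJ + qK * D qK := by
  simp [CF, dd, h.fderiv]

@[simp] lemma qI_re : qI.re = 0 := rfl
@[simp] lemma qI_imI : qI.imI = 1 := rfl
@[simp] lemma qI_imJ : qI.imJ = 0 := rfl
@[simp] lemma qI_imK : qI.imK = 0 := rfl
@[simp] lemma qJ_re : qJ.re = 0 := rfl
@[simp] lemma qJ_imI : qJ.imI = 0 := rfl
@[simp] lemma qJ_imJ : qJ.imJ = 1 := rfl
@[simp] lemma qJ_imK : qJ.imK = 0 := rfl
@[simp] lemma qK_re : qK.re = 0 := rfl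
@[simp] lemma qK_imI : qK.imI = 0 := rfl
@[simp] lemma qK_imJ : qK.imJ = 0 := rfl
@[simp] lemma qK_imK : qK.imK = 1 := rfl

@[simp] lemma star_qI : star qI = -qI := by ext <;> simp
@[simp] lemma star_qJ : star qJ = -qJ := by ext <;> simp
@[simp] lemma star_qK : star qK = -qK := by ext <;> simp

lemma keyA (x : ℍ[ℝ]) : x + qI*x*qI + qJ*x*qJ + qK*x*qK = ((-2:ℝ) : ℍ[ℝ]) * star x := by
  ext <;> simp <;> ring

lemma keyB (x y z : ℍ[ℝ]) :
    x * 1 * y * z + qI * (x * qI * y * z) + qJ * (x * qJ * y * z) + qK * (x * qK * y * z)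
      = ((-2:ℝ) : ℍ[ℝ]) * star x * y * z := by
  have h : x * 1 * y * z + qI * (x * qI * y * z) + qJ * (x * qJ * y * z) + qK * (x * qK * y * z)
      = (x + qI*x*qI + qJ*x*qJ + qK*x*qK) * y * z := by noncomm_ring
  rw [h, keyA]

lemma keyC (x y z : ℍ[ℝ]) :
    x * (y * 1 * z) + qI * (x * (y * (-qI) * z)) + qJ * (x * (y * (-qJ) * z))
        + qK * (x * (y * (-qK) * z))
      = ((2:ℝ) : ℍ[ℝ]) * (x * y + star (x * y)) * z := by
  have h : x * (y * 1 * z) + qI * (x * (y * (-qI) * z)) + qJ * (x * (y * (-qJ) * z))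
        + qK * (x * (y * (-qK) * z))
      = (x*y) * z - (qI*(x*y)*qI + qJ*(x*y)*qJ + qK*(x*y)*qK) * z := by noncomm_ring
  have h2 : qI*(x*y)*qI + qJ*(x*y)*qJ + qK*(x*y)*qK
      = ((-2:ℝ) : ℍ[ℝ]) * star (x*y) - (x*y) := by
    have := keyA (x*y); linear_combination (norm := noncomm_ring) this
  rw [h, h2]
  have hneg : ((-2:ℝ) : ℍ[ℝ]) = -((2:ℝ) : ℍ[ℝ]) := by push_cast; ring
  rw [hneg]
  have h3 : ((2:ℝ) : ℍ[ℝ]) = (2 : ℍ[ℝ]) := by norm_cast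
  rw [h3]; noncomm_ring

lemma CF_mono (m n : ℕ) (q : ℍ[ℝ]) :
    CF (fun x : ℍ[ℝ] => x ^ m * (star x) ^ n) q =
      (∑ c ∈ Finset.range n,
        ((2:ℝ) : ℍ[ℝ]) * (q ^ m * (star q) ^ c + q ^ c * (star q) ^ m) * (star q) ^ (n - 1 - c))
      + ∑ a ∈ Finset.range m,
        ((-2:ℝ) : ℍ[ℝ]) * (star q) ^ a * q ^ (m - 1 - a) * (star q) ^ n := by
  rw [CF_eq _ _ _ (hasFDerivAt_mono m n q)]
  simp only [Dmono, ContinuousLinearMap.add_apply, ContinuousLinearMap.smul_apply,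
    ContinuousLinearMap.comp_apply, ContinuousLinearMap.smulRight_apply, starCLM_apply,
    Dpow_apply, smul_eq_mul, star_one, star_qI, star_qJ, star_qK]
  calc
    q ^ m * ∑ a ∈ Finset.range n, star q ^ a * 1 * star q ^ (n - 1 - a) +
            (∑ a ∈ Finset.range m, q ^ a * 1 * q ^ (m - 1 - a)) * star q ^ n +
          qI *
            (q ^ m * ∑ a ∈ Finset.range n, star q ^ a * -qI * star q ^ (n - 1 - a) +
              (∑ a ∈ Finset.range m, q ^ a * qI * q ^ (m - 1 - a)) * star q ^ n) +
        qJ *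
          (q ^ m * ∑ a ∈ Finset.range n, star q ^ a * -qJ * star q ^ (n - 1 - a) +
            (∑ a ∈ Finset.range m, q ^ a * qJ * q ^ (m - 1 - a)) * star q ^ n) +
      qK *
        (q ^ m * ∑ a ∈ Finset.range n, star q ^ a * -qK * star q ^ (n - 1 - a) +
          (∑ a ∈ Finset.range m, q ^ a * qK * q ^ (m - 1 - a)) * star q ^ n)
      = (∑ c ∈ Finset.range n,
          (q ^ m * (star q ^ c * 1 * star q ^ (n - 1 - c))
            + qI * (q ^ m * (star q ^ c * -qI * star q ^ (n - 1 - c)))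
            + qJ * (q ^ m * (star q ^ c * -qJ * star q ^ (n - 1 - c)))
            + qK * (q ^ m * (star q ^ c * -qK * star q ^ (n - 1 - c)))))
        + ∑ a ∈ Finset.range m,
          (q ^ a * 1 * q ^ (m - 1 - a) * star q ^ n
            + qI * (q ^ a * qI * q ^ (m - 1 - a) * star q ^ n)
            + qJ * (q ^ a * qJ * q ^ (m - 1 - a) * star q ^ n)
            + qK * (q ^ a * qK * q ^ (m - 1 - a) * star q ^ n)) := by
        simp only [Finset.mul_sum, Finset.sum_mul, mul_add, Finset.sum_add_distrib]
        abel
    _ = _ := by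
        rw [Finset.sum_congr rfl
            (fun c _ => keyC (q ^ m) ((star q) ^ c) ((star q) ^ (n - 1 - c))),
          Finset.sum_congr rfl
            (fun a _ => keyB (q ^ a) (q ^ (m - 1 - a)) ((star q) ^ n))]
        simp only [star_mul, star_pow, star_star]

lemma quat_commute (q : ℍ[ℝ]) : Commute q (star q) := by
  show q * star q = star q * q
  ext <;> simp <;> ring

def coef (k j m : ℕ) : ℝ :=
  (if j = m + 1 then 2 * (j : ℝ) else 0) + (if k ≤ j + m then 2 else 0)
    + (if j ≤ m then -2 else 0)

lemma keyP (q : ℍ[ℝ]) (r : ℝ) (a b c : ℕ) :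
    ((r : ℝ) : ℍ[ℝ]) * (star q) ^ a * q ^ b * (star q) ^ c
      = r • (q ^ b * (star q) ^ (a + c)) := by
  have hcp : (star q) ^ a * q ^ b = q ^ b * (star q) ^ a :=
    (((quat_commute q).pow_pow b a).symm).eq
  rw [pow_add, mul_assoc (((r : ℝ) : ℍ[ℝ])), mul_assoc (((r : ℝ) : ℍ[ℝ])),
    Quaternion.coe_mul_eq_smul]
  congr 1
  rw [hcp, mul_assoc]

lemma keyQ (q : ℍ[ℝ]) (r : ℝ) (b a c : ℕ) :
    ((r : ℝ) : ℍ[ℝ]) * (q ^ b * (star q) ^ a) * (star q) ^ c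
      = r • (q ^ b * (star q) ^ (a + c)) := by
  rw [pow_add, mul_assoc, Quaternion.coe_mul_eq_smul]
  congr 1
  rw [mul_assoc]

lemma step2 (k j : ℕ) (hj : j ≤ k) (q : ℍ[ℝ]) :
    (∑ c ∈ Finset.range j,
        ((2:ℝ) : ℍ[ℝ]) * (q ^ (k - j) * (star q) ^ c + q ^ c * (star q) ^ (k - j))
          * (star q) ^ (j - 1 - c))
      + ∑ a ∈ Finset.range (k - j),
        ((-2:ℝ) : ℍ[ℝ]) * (star q) ^ a * q ^ (k - j - 1 - a) * (star q) ^ j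
    = ∑ m ∈ Finset.range k, coef k j m • (q ^ (k - 1 - m) * (star q) ^ m) := by
  simp only [coef, add_smul, Finset.sum_add_distrib]
  have hsplit : ∀ c ∈ Finset.range j,
      ((2:ℝ) : ℍ[ℝ]) * (q ^ (k - j) * (star q) ^ c + q ^ c * (star q) ^ (k - j))
          * (star q) ^ (j - 1 - c)
        = ((2:ℝ) : ℍ[ℝ]) * (q ^ (k - j) * (star q) ^ c) * (star q) ^ (j - 1 - c)
          + ((2:ℝ) : ℍ[ℝ]) * (q ^ c * (star q) ^ (k - j)) * (star q) ^ (j - 1 - c) := by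
    intro c _; rw [mul_add, add_mul]
  rw [Finset.sum_congr rfl hsplit, Finset.sum_add_distrib]
  have hL1 : ∑ c ∈ Finset.range j,
      ((2:ℝ) : ℍ[ℝ]) * (q ^ (k - j) * (star q) ^ c) * (star q) ^ (j - 1 - c)
      = ∑ m ∈ Finset.range k, (if j = m + 1 then 2 * (j : ℝ) else 0)
          • (q ^ (k - 1 - m) * (star q) ^ m) := by
    simp only [ite_smul, zero_smul]
    cases j with
    | zero => simp
    | succ jj =>
        have hcond : ∀ m : ℕ, (jj + 1 = m + 1) = (m = jj) := fun m => propext (by omega)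
        simp only [hcond]
        rw [Finset.sum_ite_eq' (Finset.range k) jj
          (fun m => (2 * ((jj+1 : ℕ) : ℝ)) • (q ^ (k - 1 - m) * (star q) ^ m))]
        have hjj : jj ∈ Finset.range k := Finset.mem_range.mpr (by omega)
        rw [if_pos hjj]
        have hpt : ∀ c ∈ Finset.range (jj + 1),
            ((2:ℝ) : ℍ[ℝ]) * (q ^ (k - (jj+1)) * (star q) ^ c) * (star q) ^ (jj + 1 - 1 - c)
              = (2:ℝ) • (q ^ (k - 1 - jj) * (star q) ^ jj) := by
          intro c hc
          rw [Finset.mem_range] at hc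
          rw [keyQ q 2 (k - (jj+1)) c (jj + 1 - 1 - c)]
          have e1 : c + (jj + 1 - 1 - c) = jj := by omega
          have e2 : k - (jj + 1) = k - 1 - jj := by omega
          rw [e1, e2]
        rw [Finset.sum_congr rfl hpt, Finset.sum_const, Finset.card_range]
        rw [← Nat.cast_smul_eq_nsmul ℝ, smul_smul]
        congr 1
        push_cast; ring
  have hL2 : ∑ c ∈ Finset.range j,
      ((2:ℝ) : ℍ[ℝ]) * (q ^ c * (star q) ^ (k - j)) * (star q) ^ (j - 1 - c)
      = ∑ m ∈ Finset.range k, (if k ≤ j + m then (2:ℝ) else 0)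
          • (q ^ (k - 1 - m) * (star q) ^ m) := by
    simp only [ite_smul, zero_smul]
    rw [← Finset.sum_filter]
    have hfil : (Finset.range k).filter (fun m => k ≤ j + m) = Finset.Ico (k - j) k := by
      ext x; simp [Finset.mem_filter, Finset.mem_range, Finset.mem_Ico]; omega
    rw [hfil, Finset.sum_Ico_eq_sum_range]
    have hkk : k - (k - j) = j := by omega
    rw [hkk]
    rw [← Finset.sum_range_reflect
      (fun i => (2:ℝ) • (q ^ (k - 1 - (k - j + i)) * (star q) ^ (k - j + i))) j]
    refine Finset.sum_congr rfl fun c hc => ?_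
    rw [Finset.mem_range] at hc
    rw [keyQ q 2 c (k - j) (j - 1 - c)]
    have e1 : k - j + (j - 1 - c) = k - 1 - c := by omega
    rw [e1]
    have e2 : k - 1 - (k - 1 - c) = c := by omega
    rw [e2]
  have hL3 : ∑ a ∈ Finset.range (k - j),
      ((-2:ℝ) : ℍ[ℝ]) * (star q) ^ a * q ^ (k - j - 1 - a) * (star q) ^ j
      = ∑ m ∈ Finset.range k, (if j ≤ m then (-2:ℝ) else 0)
          • (q ^ (k - 1 - m) * (star q) ^ m) := by
    simp only [ite_smul, zero_smul]
    rw [← Finset.sum_filter]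
    have hfil : (Finset.range k).filter (fun m => j ≤ m) = Finset.Ico j k := by
      ext x; simp [Finset.mem_filter, Finset.mem_range, Finset.mem_Ico]; omega
    rw [hfil, Finset.sum_Ico_eq_sum_range]
    refine Finset.sum_congr rfl fun a ha => ?_
    rw [Finset.mem_range] at ha
    rw [keyP q (-2) a (k - j - 1 - a) j]
    have e1 : a + j = j + a := by omega
    have e2 : k - j - 1 - a = k - 1 - (j + a) := by omega
    rw [e1, e2]
  rw [hL1, hL2, hL3]

lemma gauss (n : ℕ) : ∑ i ∈ Finset.range n, (i : ℝ) = n * (n - 1) / 2 := by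
  induction n with
  | zero => simp
  | succ n ih =>
      rw [Finset.sum_range_succ, ih]
      push_cast
      ring

lemma realsum (k m : ℕ) (hm : m < k) :
    ∑ j ∈ Finset.range (k + 1), T k j * coef k j m = 0 := by
  have hd : (((k:ℝ)) + 1) * (((k:ℝ)) + 2) ≠ 0 := by positivity
  simp only [coef, mul_add, Finset.sum_add_distrib]
  have e1 : ∑ j ∈ Finset.range (k + 1), T k j * (if j = m + 1 then 2 * (j : ℝ) else 0)
      = T k (m + 1) * (2 * ((m:ℝ) + 1)) := by
    simp only [mul_ite, mul_zero]
    rw [Finset.sum_ite_eq' (Finset.range (k + 1)) (m + 1) (fun j => T k j * (2 * (j : ℝ)))]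
    rw [if_pos (Finset.mem_range.mpr (by omega))]
    push_cast
    ring
  have e2 : ∑ j ∈ Finset.range (k + 1), T k j * (if k ≤ j + m then (2:ℝ) else 0)
      = ∑ i ∈ Finset.range (m + 1), T k (k - m + i) * 2 := by
    simp only [mul_ite, mul_zero]
    rw [← Finset.sum_filter]
    have hfil : (Finset.range (k + 1)).filter (fun j => k ≤ j + m)
        = Finset.Ico (k - m) (k + 1) := by
      ext x; simp [Finset.mem_filter, Finset.mem_range, Finset.mem_Ico]; omega
    rw [hfil, Finset.sum_Ico_eq_sum_range]
    have hkk : k + 1 - (k - m) = m + 1 := by omega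
    rw [hkk]
  have e3 : ∑ j ∈ Finset.range (k + 1), T k j * (if j ≤ m then (-2:ℝ) else 0)
      = ∑ j ∈ Finset.range (m + 1), T k j * (-2) := by
    simp only [mul_ite, mul_zero]
    rw [← Finset.sum_filter]
    have hfil : (Finset.range (k + 1)).filter (fun j => j ≤ m) = Finset.range (m + 1) := by
      ext x; simp [Finset.mem_filter, Finset.mem_range]; omega
    rw [hfil]
  rw [e1, e2, e3]
  have f2 : ∑ i ∈ Finset.range (m + 1), T k (k - m + i) * 2
      = ∑ i ∈ Finset.range (m + 1),
          (4 * ((m:ℝ) + 1) - 4 * (i:ℝ)) / (((k:ℝ) + 1) * ((k:ℝ) + 2)) := by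
    refine Finset.sum_congr rfl fun i hi => ?_
    rw [Finset.mem_range] at hi
    have hcast : ((k - m + i : ℕ) : ℝ) = (k:ℝ) - m + i := by
      have : m ≤ k := hm.le
      push_cast [this]
      ring
    rw [T, hcast]
    field_simp
    ring
  have f3 : ∑ j ∈ Finset.range (m + 1), T k j * (-2)
      = ∑ j ∈ Finset.range (m + 1),
          (-4 * ((k:ℝ) + 1) + 4 * (j:ℝ)) / (((k:ℝ) + 1) * ((k:ℝ) + 2)) := by
    refine Finset.sum_congr rfl fun jj _ => ?_
    rw [T]
    field_simp
    ring
  rw [f2, f3, ← Finset.sum_div, ← Finset.sum_div]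
  rw [Finset.sum_sub_distrib, Finset.sum_add_distrib, Finset.sum_const, Finset.sum_const,
    Finset.card_range, ← Finset.mul_sum, gauss, nsmul_eq_mul, nsmul_eq_mul]
  rw [T]
  push_cast
  field_simp
  ring

lemma CF_Q (k : ℕ) (q : ℍ[ℝ]) :
    CF (Q k) q = ∑ j ∈ Finset.range (k + 1),
      T k j • CF (fun x : ℍ[ℝ] => x ^ (k - j) * (star x) ^ j) q := by
  rw [CF_eq _ _ _ (hasFDerivAt_Q k q)]
  have hD : ∀ v : ℍ[ℝ], DQ k q v
      = ∑ j ∈ Finset.range (k + 1), T k j • (Dmono (k - j) j q v) := by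
    intro v
    simp only [DQ, ContinuousLinearMap.sum_apply, ContinuousLinearMap.smul_apply,
      smul_eq_mul, Quaternion.coe_mul_eq_smul]
  rw [hD, hD, hD, hD]
  have hM : ∀ j ∈ Finset.range (k + 1),
      T k j • CF (fun x : ℍ[ℝ] => x ^ (k - j) * (star x) ^ j) q
      = T k j • (Dmono (k - j) j q 1 + qI * Dmono (k - j) j q qI
          + qJ * Dmono (k - j) j q qJ + qK * Dmono (k - j) j q qK) := by
    intro j _
    rw [CF_eq _ _ _ (hasFDerivAt_mono (k - j) j q)]
  rw [Finset.sum_congr rfl hM]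
  simp only [smul_add, Finset.sum_add_distrib, Finset.mul_sum, mul_smul_comm]

/-- Each `Q_k` is left Fueter regular: `∂Q_k(q) = 0` for all quaternions `q`. -/
theorem fueterRegular_Q (k : ℕ) (q : ℍ[ℝ]) : CF (Q k) q = 0 := by
  rw [CF_Q]
  have h1 : ∀ j ∈ Finset.range (k + 1),
      T k j • CF (fun x : ℍ[ℝ] => x ^ (k - j) * (star x) ^ j) q
      = ∑ m ∈ Finset.range k,
          (T k j * coef k j m) • (q ^ (k - 1 - m) * (star q) ^ m) := by
    intro j hj
    rw [Finset.mem_range] at hj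
    rw [CF_mono, step2 k j (by omega) q, Finset.smul_sum]
    simp only [smul_smul]
  rw [Finset.sum_congr rfl h1, Finset.sum_comm]
  refine Finset.sum_eq_zero fun m hmm => ?_
  rw [← Finset.sum_smul, realsum k m (Finset.mem_range.mp hmm), zero_smul]


end
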